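/- Let p, e ∈ ℝ³ with e₃ > 0 and e ≠ p. Then the following are equivalent: (i) for every t ∈ T one has ‖t − p‖ ≤ ‖t − e‖, and there exists t ∈ T with ‖t − p‖ = ‖t − e‖; (ii) p₃ < 0 and e = (p₁, p₂, −p₃). (Lemma 1: in the one-pursuer game the barrier 𝓑^i is the mirror point of the pursuer across T when the pursuer lies below the target plane, and is empty otherwise.) -/

import Mathlib

/-!
On the plane `z₂ = 0` the squared distance to a point `p` is the squared horizontal distance
plus `p₂²`. Hence `‖t - p‖² - ‖t - e‖²` is affine in `t ∈ T`, with linear part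
`2 ⟨t, e - p⟩`; it stays `≤ 0` on the whole plane only if this linear part vanishes, i.e. `e`
lies directly above or below `p`. The difference is then the constant `p₂² - e₂²`, so some
equality forces `e₂ = ± p₂`, and `e ≠ p` leaves the mirror point.
-/

lemma eq_zero_of_forall_mul_le {a c : ℝ} (h : ∀ x, a * x ≤ c) : a = 0 := by
  by_contra ha
  have := h ((c + 1) / a)
  rw [mul_div_cancel₀ _ ha] at this
  linarith

namespace EuclideanSpace

lemma ext_fin_three {x y : EuclideanSpace ℝ (Fin 3)} (h0 : x 0 = y 0) (h1 : x 1 = y 1)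
    (h2 : x 2 = y 2) : x = y := by
  ext i
  fin_cases i <;> assumption

lemma norm_sub_sq_of_apply_two_eq_zero {t p : EuclideanSpace ℝ (Fin 3)} (ht : t 2 = 0) :
    ‖t - p‖ ^ 2 = (t 0 - p 0) ^ 2 + (t 1 - p 1) ^ 2 + p 2 ^ 2 := by
  rw [EuclideanSpace.norm_eq, Real.sq_sqrt (by positivity)]
  simp [Fin.sum_univ_three, sq_abs, ht]

lemma horizontal_eq_of_forall_norm_sub_le {p e : EuclideanSpace ℝ (Fin 3)}
    (h : ∀ t : EuclideanSpace ℝ (Fin 3), t 2 = 0 → ‖t - p‖ ≤ ‖t - e‖) :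
    e 0 = p 0 ∧ e 1 = p 1 := by
  have hsq : ∀ x y : ℝ, (x - p 0) ^ 2 + (y - p 1) ^ 2 + p 2 ^ 2 ≤
      (x - e 0) ^ 2 + (y - e 1) ^ 2 + e 2 ^ 2 := fun x y => by
    have ht : (!₂[x, y, 0] : EuclideanSpace ℝ (Fin 3)) 2 = 0 := rfl
    have hle := (sq_le_sq₀ (norm_nonneg _) (norm_nonneg _)).2 (h _ ht)
    rwa [norm_sub_sq_of_apply_two_eq_zero ht, norm_sub_sq_of_apply_two_eq_zero ht] at hle
  set c := e 0 ^ 2 + e 1 ^ 2 + e 2 ^ 2 - (p 0 ^ 2 + p 1 ^ 2 + p 2 ^ 2)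
  have h0 : 2 * (e 0 - p 0) = 0 := eq_zero_of_forall_mul_le (c := c) fun x => by
    linear_combination hsq x 0
  have h1 : 2 * (e 1 - p 1) = 0 := eq_zero_of_forall_mul_le (c := c) fun y => by
    linear_combination hsq 0 y
  constructor <;> linarith

lemma norm_sub_eq_norm_sub_iff_of_horizontal_eq {p e t : EuclideanSpace ℝ (Fin 3)}
    (h0 : e 0 = p 0) (h1 : e 1 = p 1) (ht : t 2 = 0) :
    ‖t - p‖ = ‖t - e‖ ↔ p 2 ^ 2 = e 2 ^ 2 := by
  rw [← sq_eq_sq₀ (norm_nonneg _) (norm_nonneg _), norm_sub_sq_of_apply_two_eq_zero ht,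
    norm_sub_sq_of_apply_two_eq_zero ht, h0, h1, add_right_inj]

end EuclideanSpace

open EuclideanSpace in
theorem one_pursuer_barrier (p e : EuclideanSpace ℝ (Fin 3))
    (he : e 2 > 0) (hne : e ≠ p) :
    ((∀ t : EuclideanSpace ℝ (Fin 3), t 2 = 0 → ‖t - p‖ ≤ ‖t - e‖) ∧
      (∃ t : EuclideanSpace ℝ (Fin 3), t 2 = 0 ∧ ‖t - p‖ = ‖t - e‖)) ↔
    (p 2 < 0 ∧ e 0 = p 0 ∧ e 1 = p 1 ∧ e 2 = -(p 2)) := by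
  constructor
  · rintro ⟨hle, t, ht, heq⟩
    obtain ⟨h0, h1⟩ := horizontal_eq_of_forall_norm_sub_le hle
    have hsq := (norm_sub_eq_norm_sub_iff_of_horizontal_eq h0 h1 ht).1 heq
    obtain h2 | h2 := sq_eq_sq_iff_eq_or_eq_neg.1 hsq.symm
    · exact absurd (ext_fin_three h0 h1 h2) hne
    · exact ⟨by linarith, h0, h1, h2⟩
  · rintro ⟨-, h0, h1, h2⟩
    have hEq : ∀ t : EuclideanSpace ℝ (Fin 3), t 2 = 0 → ‖t - p‖ = ‖t - e‖ := fun t ht =>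
      (norm_sub_eq_norm_sub_iff_of_horizontal_eq h0 h1 ht).2 (by rw [h2, neg_sq])
    exact ⟨fun t ht => (hEq t ht).le, 0, rfl, hEq 0 rfl⟩
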